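/- Let 1 < p < ∞, v a weight with (v_{n+1}/v_n) bounded and L := limsup_n v_{n+1}/v_n, and r, s nonzero reals with |r| + L|s| < 1. Then B(r,s)^n → 0 in operator norm on l_p(v). -/

import Mathlib

open scoped ENNReal
open Filter

/-! `T = r • 1 + S`, where `S` is the forward shift with weights `s · v (n+1) / v n`. For any
`ρ > L` only finitely many weights exceed `|s| ρ` in modulus, so a product of `k` consecutive
weights is at most `K (|s| ρ)^k`; this bounds `‖S^k‖`. Since `r • 1` commutes with `S`, the
binomial formula gives `‖T^n‖ ≤ K (|r| + |s| ρ)^n`, and `ρ` can be taken with `|r| + |s| ρ < 1`. -/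

theorem lp.norm_le_mul_of_shift {E : Type*} [NormedAddCommGroup E] {p : ℝ≥0∞} [Fact (1 ≤ p)]
    {k : ℕ} {c : ℝ} (hc : 0 ≤ c) {x y : lp (fun _ : ℕ => E) p}
    (hy₀ : ∀ m < k, y m = 0) (hy : ∀ n, ‖y (n + k)‖ ≤ c * ‖x n‖) : ‖y‖ ≤ c * ‖x‖ := by
  have hp₀ : p ≠ 0 := (zero_lt_one.trans_le (Fact.out : 1 ≤ p)).ne'
  rcases eq_or_ne p ⊤ with rfl | hp
  · refine lp.norm_le_of_forall_le (mul_nonneg hc (norm_nonneg x)) fun m => ?_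
    rcases lt_or_ge m k with hm | hm
    · simpa [hy₀ m hm] using mul_nonneg hc (norm_nonneg x)
    · obtain ⟨n, rfl⟩ := Nat.exists_eq_add_of_le' hm
      exact (hy n).trans (mul_le_mul_of_nonneg_left (lp.norm_apply_le_norm hp₀ x n) hc)
  have hq : 0 < p.toReal := ENNReal.toReal_pos hp₀ hp
  have hsupp : Function.support (fun m => ‖y m‖ ^ p.toReal) ⊆ Set.range (· + k) := by
    intro m hm
    rcases lt_or_ge m k with h | h
    · simp [hy₀ m h, Real.zero_rpow hq.ne'] at hm
    · exact ⟨m - k, Nat.sub_add_cancel h⟩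
  refine lp.norm_le_of_tsum_le hq (mul_nonneg hc (norm_nonneg x)) ?_
  calc ∑' m, ‖y m‖ ^ p.toReal = ∑' n, ‖y (n + k)‖ ^ p.toReal :=
        ((add_left_injective k).tsum_eq hsupp).symm
    _ ≤ ∑' n, c ^ p.toReal * ‖x n‖ ^ p.toReal := by
        refine Summable.tsum_le_tsum (fun n => ?_)
          (((lp.memℓp y).summable hq).comp_injective (add_left_injective k))
          (((lp.memℓp x).summable hq).mul_left _)
        rw [← Real.mul_rpow hc (norm_nonneg _)]
        exact Real.rpow_le_rpow (norm_nonneg _) (hy n) hq.le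
    _ = (c * ‖x‖) ^ p.toReal := by
        rw [tsum_mul_left, ← lp.norm_rpow_eq_tsum hq, Real.mul_rpow hc (norm_nonneg _)]

section WeightedShift

variable {𝕜 E : Type*} [NontriviallyNormedField 𝕜] [NormedAddCommGroup E] [NormedSpace 𝕜 E]
  {p : ℝ≥0∞} [Fact (1 ≤ p)] {S : lp (fun _ : ℕ => E) p →L[𝕜] lp (fun _ : ℕ => E) p} {a : ℕ → 𝕜}

theorem weightedShift_pow_apply (hS₀ : ∀ x, S x 0 = 0) (hS : ∀ x n, S x (n + 1) = a n • x n)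
    (k : ℕ) (x : lp (fun _ : ℕ => E) p) :
    (∀ m < k, (S ^ k) x m = 0) ∧ ∀ n, (S ^ k) x (n + k) = (∏ j ∈ Finset.range k, a (n + j)) • x n := by
  induction k with
  | zero => simp
  | succ k ih =>
    rw [pow_succ', mul_apply_eq_comp]
    refine ⟨fun m hm => ?_, fun n => ?_⟩
    · cases m with
      | zero => exact hS₀ _
      | succ m => rw [hS, ih.1 m (by omega), smul_zero]
    · rw [← add_assoc, hS, ih.2, smul_smul, Finset.prod_range_succ, mul_comm]

theorem norm_weightedShift_pow_le (hS₀ : ∀ x, S x 0 = 0) (hS : ∀ x n, S x (n + 1) = a n • x n)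
    {k : ℕ} {c : ℝ} (hc : 0 ≤ c) (ha : ∀ n, ∏ j ∈ Finset.range k, ‖a (n + j)‖ ≤ c) :
    ‖S ^ k‖ ≤ c := by
  refine ContinuousLinearMap.opNorm_le_bound _ hc fun x => ?_
  refine lp.norm_le_mul_of_shift hc (weightedShift_pow_apply hS₀ hS k x).1 fun n => ?_
  rw [(weightedShift_pow_apply hS₀ hS k x).2, norm_smul, norm_prod]
  exact mul_le_mul_of_nonneg_right (ha n) (norm_nonneg _)

end WeightedShift

theorem norm_smul_one_add_pow_le {𝕜 A : Type*} [NormedField 𝕜] [NormedRing A] [NormedAlgebra 𝕜 A]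
    (c : 𝕜) {a : A} {K ρ : ℝ} (ha : ∀ k, ‖a ^ k‖ ≤ K * ρ ^ k) (n : ℕ) :
    ‖(c • 1 + a) ^ n‖ ≤ K * (‖c‖ + ρ) ^ n := by
  rw [((Commute.one_left a).smul_left c).add_pow, add_pow, Finset.mul_sum]
  refine (norm_sum_le _ _).trans (Finset.sum_le_sum fun m _ => ?_)
  rw [smul_pow, one_pow, smul_one_mul, ← nsmul_eq_mul']
  calc ‖n.choose m • c ^ m • a ^ (n - m)‖ ≤ n.choose m * (‖c‖ ^ m * ‖a ^ (n - m)‖) := by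
        refine norm_nsmul_le.trans (mul_le_mul_of_nonneg_left ?_ (Nat.cast_nonneg _))
        exact (norm_smul_le _ _).trans_eq (by rw [norm_pow])
    _ ≤ n.choose m * (‖c‖ ^ m * (K * ρ ^ (n - m))) := by gcongr; exact ha _
    _ = K * (‖c‖ ^ m * ρ ^ (n - m) * n.choose m) := by ring

theorem exists_prod_range_le_mul_pow {w : ℕ → ℝ} (hw₀ : ∀ n, 0 ≤ w n) {B ρ : ℝ}
    (hB : ∀ n, w n ≤ B) (hρ : 0 < ρ) (hev : ∀ᶠ n in atTop, w n ≤ ρ) :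
    ∃ K, 0 ≤ K ∧ ∀ n k, ∏ j ∈ Finset.range k, w (n + j) ≤ K * ρ ^ k := by
  obtain ⟨N, hN⟩ := eventually_atTop.mp hev
  set C := max 1 (B / ρ)
  have hC : 1 ≤ C := le_max_left _ _
  -- each factor before index `N` costs at most one extra factor `C`
  have hstep : ∀ n, w n * C ^ (N - (n + 1)) ≤ ρ * C ^ (N - n) := by
    intro n
    rcases le_or_gt N n with hn | hn
    · rw [Nat.sub_eq_zero_of_le hn, Nat.sub_eq_zero_of_le (by omega)]
      simpa using hN n hn
    · rw [show N - n = N - (n + 1) + 1 by omega, pow_succ, ← mul_assoc, mul_right_comm]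
      refine mul_le_mul_of_nonneg_right ?_ (by positivity)
      calc w n ≤ B := hB n
        _ ≤ ρ * C := by rw [← div_le_iff₀' hρ]; exact le_max_right _ _
  have hprod : ∀ k n, ∏ j ∈ Finset.range k, w (n + j) ≤ C ^ (N - n) * ρ ^ k := by
    intro k
    induction k with
    | zero => simpa using fun n => one_le_pow₀ hC
    | succ k ih =>
      intro n
      rw [Finset.prod_range_succ', add_zero, mul_comm]
      simp_rw [← add_assoc, add_right_comm n _ 1]
      calc w n * ∏ j ∈ Finset.range k, w (n + 1 + j)
          ≤ w n * (C ^ (N - (n + 1)) * ρ ^ k) := mul_le_mul_of_nonneg_left (ih _) (hw₀ n)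
        _ ≤ ρ * C ^ (N - n) * ρ ^ k := by
          rw [← mul_assoc]; exact mul_le_mul_of_nonneg_right (hstep n) (by positivity)
        _ = C ^ (N - n) * ρ ^ (k + 1) := by ring
  refine ⟨C ^ N, by positivity, fun n k => (hprod k n).trans ?_⟩
  gcongr
  exact Nat.sub_le N n

theorem stmt14 (p : ℝ≥0∞) [Fact (1 ≤ p)]
    (v : ℕ → ℝ) (hv : ∀ n, 0 < v n) (hbd : ∃ M : ℝ, ∀ n, v (n + 1) / v n ≤ M)
    (L : ℝ) (hL : L = limsup (fun n => v (n + 1) / v n) atTop)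
    (r s : ℝ) (hrs : |r| + L * |s| < 1)
    (T : lp (fun _ : ℕ => ℂ) p →L[ℂ] lp (fun _ : ℕ => ℂ) p)
    (hT : ∀ x : lp (fun _ : ℕ => ℂ) p,
      (T x : ∀ _ : ℕ, ℂ) 0 = (r : ℂ) * (x : ∀ _ : ℕ, ℂ) 0 ∧
      ∀ n : ℕ, (T x : ∀ _ : ℕ, ℂ) (n + 1)
        = ((s * (v (n + 1) / v n) : ℝ) : ℂ) * (x : ∀ _ : ℕ, ℂ) n
          + (r : ℂ) * (x : ∀ _ : ℕ, ℂ) (n + 1)) :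
    Tendsto (fun n : ℕ => ‖T ^ n‖) atTop (nhds 0) := by
  set w : ℕ → ℝ := fun n => v (n + 1) / v n
  have hw₀ : ∀ n, 0 ≤ w n := fun n => (div_pos (hv _) (hv _)).le
  obtain ⟨M, hM⟩ := hbd
  have hL₀ : 0 ≤ L := hL ▸ le_limsup_of_frequently_le (.of_forall hw₀) (isBoundedUnder_of ⟨M, hM⟩)
  have hcont : Continuous fun ρ : ℝ => |r| + |s| * ρ := by fun_prop
  obtain ⟨ρ, hρ, hLρ⟩ := (((hcont.tendsto L).mono_left nhdsWithin_le_nhds).eventually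
    (gt_mem_nhds (a := 1) (by linarith)) |>.and (self_mem_nhdsWithin (s := Set.Ioi L))).exists
  have hρ₀ : 0 ≤ |s| * ρ := mul_nonneg (abs_nonneg s) (hL₀.trans hLρ.le)
  obtain ⟨K, hK, hprod⟩ := exists_prod_range_le_mul_pow hw₀ hM (hL₀.trans_lt hLρ)
    ((eventually_lt_of_limsup_lt (hL ▸ hLρ) (isBoundedUnder_of ⟨M, hM⟩)).mono fun _ => le_of_lt)
  set S := T - (r : ℂ) • 1
  have hSapply : ∀ x m, S x m = T x m - r * x m := fun x m => by
    rw [sub_apply, lp.coeFn_sub, Pi.sub_apply, smul_apply, one_apply_eq_self,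
      lp.coeFn_smul, Pi.smul_apply, smul_eq_mul]
  have hS₀ : ∀ x, S x 0 = 0 := fun x => by rw [hSapply, (hT x).1, sub_self]
  have hS : ∀ x n, S x (n + 1) = ((s * w n : ℝ) : ℂ) • x n := fun x n => by
    rw [hSapply, (hT x).2, add_sub_cancel_right, smul_eq_mul]
  have hSpow : ∀ k, ‖S ^ k‖ ≤ K * (|s| * ρ) ^ k := fun k =>
    norm_weightedShift_pow_le hS₀ hS (mul_nonneg hK (pow_nonneg hρ₀ k)) fun n => by
      simp only [Complex.norm_real, Real.norm_eq_abs, abs_mul, abs_of_nonneg (hw₀ _),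
        Finset.prod_mul_distrib, Finset.prod_const, Finset.card_range, mul_pow]
      rw [mul_left_comm]
      exact mul_le_mul_of_nonneg_left (hprod n k) (by positivity)
  have hT' : T = (r : ℂ) • 1 + S := (add_sub_cancel _ T).symm
  refine squeeze_zero (fun n => norm_nonneg _) (fun n => hT' ▸ norm_smul_one_add_pow_le _ hSpow n) ?_
  simpa using (tendsto_pow_atTop_nhds_zero_of_lt_one (by positivity) hρ).const_mul K
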